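/- Let B be a convex bounded set in ℝ^2, let x ∈ B, let θ ∈ [0,2π) and φ ∈ (0,π], and let s > 0. If A_{θ,φ}(x,s;B) ∩ ∂B(x;s) ≠ ∅ and s > dist(x, ∂B), then the Lebesgue area of A_{θ,φ}(x,s;B) is at least s · sin(φ/2) · dist(x, ∂B) / 2. -/

import Mathlib

/-!
For `φ ≤ π` the cone is an intersection of two half-planes, so the region
`A = B(x;s) ∩ B ∩ C_{θ,φ}(x)` is convex. Writing `e(ψ) = (-sin ψ, cos ψ)`, it contains `x`, a
point `z = x + s e(ψ₁)` of the sphere, and, for every `r < dist(x, ∂B)`, the point `x + r e(ψ₂)`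
of the inscribed ball, where `ψ₂` is an angle of the cone with `|ψ₂ - ψ₁| = φ / 2`. Hence `A`
contains the triangle spanned by these three points, whose area is `s r sin(φ/2) / 2`; then let
`r → dist(x, ∂B)`.
-/

open MeasureTheory Real

noncomputable section

/-- The closed half-cone in `ℝ^2` of angle `φ` with vertex `x`, whose boundary
rays from `x` are at angles `θ` and `θ + φ`, measured anticlockwise from the
upwards vertical direction `(0,1)` (the direction at angle `ψ` being
`(-sin ψ, cos ψ)`). -/
def cone2 (θ φ : ℝ) (x : EuclideanSpace ℝ (Fin 2)) : Set (EuclideanSpace ℝ (Fin 2)) :=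
  {y | ∃ r : ℝ, 0 ≤ r ∧ ∃ ψ ∈ Set.Icc θ (θ + φ),
    y = x + r • (EuclideanSpace.equiv (Fin 2) ℝ).symm ![-(Real.sin ψ), Real.cos ψ]}

/-- `dist(x, ∂B) = sup {r : B(x;r) ⊆ B}`, the inradius of `B` at `x`. -/
def distToBoundary (x : EuclideanSpace ℝ (Fin 2)) (B : Set (EuclideanSpace ℝ (Fin 2))) : ℝ :=
  sSup {r : ℝ | Metric.closedBall x r ⊆ B}

def dirVec (ψ : ℝ) : EuclideanSpace ℝ (Fin 2) :=
  (EuclideanSpace.equiv (Fin 2) ℝ).symm ![-(Real.sin ψ), Real.cos ψ]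

@[simp] lemma dirVec_apply_zero (ψ : ℝ) : dirVec ψ 0 = -Real.sin ψ := rfl

@[simp] lemma dirVec_apply_one (ψ : ℝ) : dirVec ψ 1 = Real.cos ψ := rfl

lemma norm_dirVec (ψ : ℝ) : ‖dirVec ψ‖ = 1 := by
  simp [EuclideanSpace.norm_eq, Fin.sum_univ_two]

lemma inner_dirVec (α ψ : ℝ) : inner ℝ (dirVec α) (dirVec ψ) = Real.cos (ψ - α) := by
  simp only [PiLp.inner_apply, RCLike.inner_apply, ringHom_apply, Fin.sum_univ_two,
    dirVec_apply_zero, dirVec_apply_one, Real.cos_sub]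
  ring

lemma periodic_dirVec : Function.Periodic dirVec (2 * π) := by
  intro ψ
  simp [dirVec]

lemma exists_eq_smul_dirVec (V : EuclideanSpace ℝ (Fin 2)) (θ : ℝ) :
    ∃ ψ ∈ Set.Ioc (θ - π) (θ + π), V = ‖V‖ • dirVec ψ := by
  set w : ℂ := ⟨V 1, -V 0⟩
  have hV : V = ‖w‖ • dirVec w.arg := by
    ext i
    fin_cases i
    · simp [mul_neg, Complex.norm_mul_sin_arg, w]
    · simp [Complex.norm_mul_cos_arg, w]
  have hnorm : ‖V‖ = ‖w‖ := by
    conv_lhs => rw [hV]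
    rw [norm_smul, norm_dirVec, norm_norm, mul_one]
  refine ⟨toIocMod two_pi_pos (θ - π) w.arg, ?_, ?_⟩
  · simpa [show θ - π + 2 * π = θ + π by ring] using toIocMod_mem_Ioc two_pi_pos (θ - π) w.arg
  · rw [← self_sub_toIocDiv_zsmul, periodic_dirVec.sub_zsmul_eq, hnorm]
    exact hV

lemma inner_dirVec_add_pi_div_two (α ψ : ℝ) :
    inner ℝ (dirVec (α + π / 2)) (dirVec ψ) = Real.sin (ψ - α) := by
  rw [inner_dirVec, show ψ - (α + π / 2) = ψ - α - π / 2 by ring, Real.cos_sub_pi_div_two]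

lemma inner_dirVec_sub_pi_div_two (α ψ : ℝ) :
    inner ℝ (dirVec (α - π / 2)) (dirVec ψ) = Real.sin (α - ψ) := by
  rw [inner_dirVec, show ψ - (α - π / 2) = -(α - ψ) + π / 2 by ring, Real.cos_add_pi_div_two,
    Real.sin_neg, neg_neg]

lemma mem_cone2_iff {θ φ : ℝ} {x y : EuclideanSpace ℝ (Fin 2)} :
    y ∈ cone2 θ φ x ↔ ∃ r : ℝ, 0 ≤ r ∧ ∃ ψ ∈ Set.Icc θ (θ + φ), y = x + r • dirVec ψ := by
  rfl

lemma nonneg_of_sin_nonneg {t : ℝ} (ht : -π < t) (hsin : 0 ≤ Real.sin t) : 0 ≤ t :=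
  not_lt.1 fun h => (Real.sin_neg_of_neg_of_neg_pi_lt h ht).not_ge hsin

/-- `dirVec (θ + π / 2)` and `dirVec (θ + φ - π / 2)` are the inward normals of the rays at
angles `θ` and `θ + φ`. -/
lemma cone2_eq_inter {θ φ : ℝ} (hφ0 : 0 < φ) (hφπ : φ ≤ π) (x : EuclideanSpace ℝ (Fin 2)) :
    cone2 θ φ x = {y | 0 ≤ inner ℝ (dirVec (θ + π / 2)) (y - x)} ∩
      {y | 0 ≤ inner ℝ (dirVec (θ + φ - π / 2)) (y - x)} := by
  ext y
  simp only [Set.mem_inter_iff, Set.mem_ofPred_eq, mem_cone2_iff]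
  constructor
  · rintro ⟨r, hr, ψ, ⟨hθψ, hψφ⟩, rfl⟩
    simp only [add_sub_cancel_left, inner_smul_right, inner_dirVec_add_pi_div_two,
      inner_dirVec_sub_pi_div_two]
    exact ⟨mul_nonneg hr (Real.sin_nonneg_of_nonneg_of_le_pi (by linarith) (by linarith)),
      mul_nonneg hr (Real.sin_nonneg_of_nonneg_of_le_pi (by linarith) (by linarith))⟩
  · rintro ⟨h₁, h₂⟩
    obtain ⟨ψ, ⟨hψl, hψu⟩, hV⟩ := exists_eq_smul_dirVec (y - x) θ
    rcases eq_or_ne y x with rfl | hyx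
    · exact ⟨0, le_rfl, θ, ⟨le_rfl, by linarith⟩, by simp⟩
    have hpos : 0 < ‖y - x‖ := norm_pos_iff.2 (sub_ne_zero.2 hyx)
    rw [hV, inner_smul_right, inner_dirVec_add_pi_div_two] at h₁
    rw [hV, inner_smul_right, inner_dirVec_sub_pi_div_two] at h₂
    have hθψ := nonneg_of_sin_nonneg (by linarith) (nonneg_of_mul_nonneg_right h₁ hpos)
    have hψφ := nonneg_of_sin_nonneg (by linarith) (nonneg_of_mul_nonneg_right h₂ hpos)
    exact ⟨‖y - x‖, hpos.le, ψ, ⟨by linarith, by linarith⟩, eq_add_of_sub_eq' hV⟩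

lemma convex_halfPlane (n x : EuclideanSpace ℝ (Fin 2)) :
    Convex ℝ {y | 0 ≤ inner ℝ n (y - x)} := by
  simp_rw [inner_sub_right, sub_nonneg]
  exact convex_halfSpace_ge (innerₛₗ ℝ n).isLinear _

lemma convex_cone2 {θ φ : ℝ} (hφ0 : 0 < φ) (hφπ : φ ≤ π) (x : EuclideanSpace ℝ (Fin 2)) :
    Convex ℝ (cone2 θ φ x) := by
  rw [cone2_eq_inter hφ0 hφπ]
  exact (convex_halfPlane _ _).inter (convex_halfPlane _ _)

def stdTriangle : Set (EuclideanSpace ℝ (Fin 2)) :=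
  {p | p 0 ∈ Set.Ioo 0 1 ∧ p 1 ∈ Set.Ioo 0 (1 - p 0)}

lemma volume_stdTriangle : volume stdTriangle = ENNReal.ofReal (1 / 2) := by
  set e := (MeasurableEquiv.toLp 2 (Fin 2 → ℝ)).symm.trans MeasurableEquiv.finTwoArrow
  have hm : MeasurePreserving e :=
    (volume_preserving_finTwoArrow ℝ).comp
      (EuclideanSpace.volume_preserving_symm_measurableEquiv_toLp (Fin 2))
  have hR : MeasurableSet (regionBetween (fun _ => 0) (fun a : ℝ => 1 - a) (Set.Ioo 0 1)) :=
    measurableSet_regionBetween measurable_const (measurable_const.sub measurable_id)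
      measurableSet_Ioo
  have h1 : IntegrableOn (fun _ : ℝ => (0 : ℝ)) (Set.Ioo 0 1) :=
    integrableOn_const measure_Ioo_lt_top.ne
  have h2 : IntegrableOn (fun a : ℝ => 1 - a) (Set.Ioo 0 1) :=
    (continuous_const.sub continuous_id).integrableOn_Icc.mono_set Set.Ioo_subset_Icc_self
  rw [show stdTriangle = e ⁻¹' regionBetween (fun _ => 0) (fun a => 1 - a) (Set.Ioo 0 1) from rfl,
    hm.measure_preimage hR.nullMeasurableSet, Measure.volume_eq_prod,
    volume_regionBetween_eq_integral h1 h2 measurableSet_Ioo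
      fun a ha => by linarith [ha.2]]
  rw [← integral_Ioc_eq_integral_Ioo, ← intervalIntegral.integral_of_le zero_le_one]
  simp only [Pi.sub_apply, sub_zero]
  rw [intervalIntegral.integral_sub intervalIntegrable_const intervalIntegral.intervalIntegrable_id,
    integral_id]
  norm_num

lemma Convex.add_smul_add_smul_mem {E : Type*} [AddCommGroup E] [Module ℝ E] {A : Set E}
    (hA : Convex ℝ A) {x u v : E} (hx : x ∈ A) (hu : x + u ∈ A) (hv : x + v ∈ A) {a b : ℝ}
    (ha : 0 ≤ a) (hb : 0 ≤ b) (hab : a + b ≤ 1) : x + (a • u + b • v) ∈ A := by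
  have h := hA.sum_mem (t := Finset.univ) (w := ![1 - a - b, a, b]) (z := ![x, x + u, x + v])
    (fun i _ => by fin_cases i <;> simp only [Fin.reduceFinMk, Matrix.cons_val] <;> linarith)
    (by simp only [Fin.sum_univ_three, Matrix.cons_val]; ring)
    (fun i _ => by fin_cases i <;> simpa)
  convert h using 1
  simp only [Fin.sum_univ_three, Matrix.cons_val]
  module

lemma Convex.ofReal_abs_det_div_two_le_volume {A : Set (EuclideanSpace ℝ (Fin 2))}
    (hA : Convex ℝ A) {x u v : EuclideanSpace ℝ (Fin 2)} (hx : x ∈ A) (hu : x + u ∈ A)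
    (hv : x + v ∈ A) : ENNReal.ofReal (|u 0 * v 1 - v 0 * u 1| / 2) ≤ volume A := by
  set f : EuclideanSpace ℝ (Fin 2) →ₗ[ℝ] EuclideanSpace ℝ (Fin 2) :=
    Matrix.toEuclideanLin !![u 0, v 0; u 1, v 1] with hf_def
  have hf : ∀ p, f p = p 0 • u + p 1 • v := by
    intro p
    ext i
    fin_cases i <;>
      simp only [f, Fin.zero_eta, Fin.mk_one, Matrix.ofLp_toLpLin, Matrix.toLin'_apply,
        Matrix.mulVec, dotProduct, Matrix.of_apply, Matrix.cons_val', Matrix.cons_val_fin_one,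
        Matrix.cons_val_zero, Matrix.cons_val_one, Fin.sum_univ_two, PiLp.add_apply,
        PiLp.smul_apply, smul_eq_mul] <;> ring
  have hdet : LinearMap.det f = u 0 * v 1 - v 0 * u 1 := by
    rw [hf_def, Matrix.toEuclideanLin_eq_toLin_orthonormal, LinearMap.det_toLin,
      Matrix.det_fin_two_of]
  have hsub : (x + ·) '' (f '' stdTriangle) ⊆ A := by
    rintro _ ⟨_, ⟨p, ⟨⟨hp0, -⟩, ⟨hp1, hp01⟩⟩, rfl⟩, rfl⟩
    rw [hf]
    exact hA.add_smul_add_smul_mem hx hu hv hp0.le hp1.le (by linarith)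
  calc ENNReal.ofReal (|u 0 * v 1 - v 0 * u 1| / 2)
      = ENNReal.ofReal |LinearMap.det f| * volume stdTriangle := by
        rw [volume_stdTriangle, ← ENNReal.ofReal_mul (abs_nonneg _), hdet, mul_one_div]
    _ = volume (f '' stdTriangle) := (Measure.addHaar_image_linearMap _ _ _).symm
    _ = volume ((x + ·) '' (f '' stdTriangle)) := by
        rw [Set.image_add_left, measure_preimage_add]
    _ ≤ volume A := measure_mono hsub

lemma cross_smul_dirVec (a b ψ α : ℝ) :
    (a • dirVec ψ) 0 * (b • dirVec α) 1 - (b • dirVec α) 0 * (a • dirVec ψ) 1 =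
      a * b * Real.sin (α - ψ) := by
  simp only [PiLp.smul_apply, dirVec_apply_zero, dirVec_apply_one, smul_eq_mul, Real.sin_sub]
  ring

lemma exists_mem_Icc_abs_sin_sub_eq {θ φ ψ : ℝ} (hψ : ψ ∈ Set.Icc θ (θ + φ)) :
    ∃ ψ' ∈ Set.Icc θ (θ + φ), |Real.sin (ψ' - ψ)| = |Real.sin (φ / 2)| := by
  obtain ⟨hθψ, hψφ⟩ := hψ
  rcases le_total ψ (θ + φ / 2) with h | h
  · exact ⟨ψ + φ / 2, ⟨by linarith, by linarith⟩, by rw [add_sub_cancel_left]⟩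
  · exact ⟨ψ - φ / 2, ⟨by linarith, by linarith⟩,
      by rw [sub_sub_cancel_left, Real.sin_neg, abs_neg]⟩

lemma closedBall_subset_of_lt_distToBoundary {x : EuclideanSpace ℝ (Fin 2)}
    {B : Set (EuclideanSpace ℝ (Fin 2))} (hx : x ∈ B) {r : ℝ} (hr : r < distToBoundary x B) :
    Metric.closedBall x r ⊆ B := by
  obtain ⟨r', hr'B, hrr'⟩ := exists_lt_of_lt_csSup ⟨0, by simpa using hx⟩ hr
  exact (Metric.closedBall_subset_closedBall hrr'.le).trans hr'B

lemma ofReal_le_volume_coneRegion {B : Set (EuclideanSpace ℝ (Fin 2))} (hB : Convex ℝ B)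
    {x : EuclideanSpace ℝ (Fin 2)} (hx : x ∈ B) {θ φ s r : ℝ} (hφ0 : 0 < φ) (hφπ : φ ≤ π)
    (hmeet : ((Metric.closedBall x s ∩ B ∩ cone2 θ φ x) ∩ Metric.sphere x s).Nonempty)
    (hr : 0 ≤ r) (hrs : r ≤ s) (hball : Metric.closedBall x r ⊆ B) :
    ENNReal.ofReal (s * Real.sin (φ / 2) * r / 2) ≤
      volume (Metric.closedBall x s ∩ B ∩ cone2 θ φ x) := by
  have hs : 0 ≤ s := hr.trans hrs
  obtain ⟨z, hzA, hzs⟩ := hmeet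
  obtain ⟨ρ, hρ, ψ₁, hψ₁, rfl⟩ := mem_cone2_iff.1 hzA.2
  obtain rfl : s = ρ := by
    simpa [norm_smul, norm_dirVec, abs_of_nonneg hρ, eq_comm] using hzs
  obtain ⟨ψ₂, hψ₂, hsin⟩ := exists_mem_Icc_abs_sin_sub_eq hψ₁
  have hA : Convex ℝ (Metric.closedBall x s ∩ B ∩ cone2 θ φ x) :=
    ((convex_closedBall x s).inter hB).inter (convex_cone2 hφ0 hφπ x)
  have hxA : x ∈ Metric.closedBall x s ∩ B ∩ cone2 θ φ x :=
    ⟨⟨Metric.mem_closedBall_self hs, hx⟩, ⟨0, le_rfl, θ, ⟨le_rfl, by linarith⟩, by simp⟩⟩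
  have hwA : x + r • dirVec ψ₂ ∈ Metric.closedBall x s ∩ B ∩ cone2 θ φ x := by
    have hw : x + r • dirVec ψ₂ ∈ Metric.closedBall x r := by
      simp [norm_smul, norm_dirVec, abs_of_nonneg hr]
    exact ⟨⟨Metric.closedBall_subset_closedBall hrs hw, hball hw⟩, ⟨r, hr, ψ₂, hψ₂, rfl⟩⟩
  calc ENNReal.ofReal (s * Real.sin (φ / 2) * r / 2)
      ≤ ENNReal.ofReal (|(s • dirVec ψ₁) 0 * (r • dirVec ψ₂) 1
          - (r • dirVec ψ₂) 0 * (s • dirVec ψ₁) 1| / 2) := by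
        rw [cross_smul_dirVec, abs_mul, abs_of_nonneg (mul_nonneg hs hr), hsin]
        exact ENNReal.ofReal_le_ofReal
          (by nlinarith [le_abs_self (Real.sin (φ / 2)), mul_nonneg hs hr])
    _ ≤ _ := hA.ofReal_abs_det_div_two_le_volume hxA hzA hwA

theorem coneRegionAreaLowerBound_general
    (B : Set (EuclideanSpace ℝ (Fin 2))) (hBconv : Convex ℝ B)
    (x : EuclideanSpace ℝ (Fin 2)) (hx : x ∈ B)
    (θ φ s : ℝ) (hφ0 : 0 < φ) (hφπ : φ ≤ π)
    (hs : 0 < s)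
    (hmeet : ((Metric.closedBall x s ∩ B ∩ cone2 θ φ x) ∩ Metric.sphere x s).Nonempty)
    (hsd : distToBoundary x B < s) :
    ENNReal.ofReal (s * Real.sin (φ / 2) * distToBoundary x B / 2) ≤
      volume (Metric.closedBall x s ∩ B ∩ cone2 θ φ x) := by
  have hsin : 0 ≤ Real.sin (φ / 2) :=
    Real.sin_nonneg_of_nonneg_of_le_pi (by linarith) (by linarith [Real.pi_pos])
  have hbound : ∀ r < distToBoundary x B, ENNReal.ofReal (s * Real.sin (φ / 2) * r / 2) ≤
      volume (Metric.closedBall x s ∩ B ∩ cone2 θ φ x) := by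
    intro r hrd
    rcases le_or_gt r 0 with hr | hr
    · rw [ENNReal.ofReal_of_nonpos (by nlinarith [mul_nonneg hs.le hsin])]
      exact zero_le
    · exact ofReal_le_volume_coneRegion hBconv hx hφ0 hφπ hmeet hr.le (by linarith)
        (closedBall_subset_of_lt_distToBoundary hx hrd)
  have hcont : Continuous fun r => ENNReal.ofReal (s * Real.sin (φ / 2) * r / 2) :=
    ENNReal.continuous_ofReal.comp (by fun_prop)
  exact le_of_tendsto (hcont.continuousWithinAt (s := Set.Iio _) (x := distToBoundary x B))
    (eventually_nhdsWithin_of_forall hbound)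

/-- If `B ⊂ ℝ^2` is convex and bounded, `x ∈ B`, and the region
`A_{θ,φ}(x,s;B) = B(x;s) ∩ B ∩ C_{θ,φ}(x)` meets the sphere `∂B(x;s)`, with
`s > dist(x,∂B)`, then the area of `A_{θ,φ}(x,s;B)` is at least
`s sin(φ/2) dist(x,∂B) / 2`. -/
theorem coneRegionAreaLowerBound
    (B : Set (EuclideanSpace ℝ (Fin 2))) (hBconv : Convex ℝ B)
    (hBbdd : Bornology.IsBounded B)
    (x : EuclideanSpace ℝ (Fin 2)) (hx : x ∈ B)
    (θ φ s : ℝ) (hθ0 : 0 ≤ θ) (hθ2 : θ < 2 * π) (hφ0 : 0 < φ) (hφπ : φ ≤ π)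
    (hs : 0 < s)
    (hmeet : ((Metric.closedBall x s ∩ B ∩ cone2 θ φ x) ∩ Metric.sphere x s).Nonempty)
    (hsd : distToBoundary x B < s) :
    ENNReal.ofReal (s * Real.sin (φ / 2) * distToBoundary x B / 2) ≤
      volume (Metric.closedBall x s ∩ B ∩ cone2 θ φ x) :=
  coneRegionAreaLowerBound_general B hBconv x hx θ φ s hφ0 hφπ hs hmeet hsd
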